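/- arXiv:1506.05734 — 2 statements merged into one kernel-verified Lean document; each statement's English description precedes it below -/
import Mathlib

section
/- Let s > m ≥ 0 be integers. Then ∫ (P_{2^m} + r_m/2) dν_s = 0; that is, the average of P_{2^m}(x) + r_m/2 over the 2^s zeros of P_{2^s} + r_s/2 equals 0. -/
open Polynomial

noncomputable def r (γ : ℕ → ℝ) : ℕ → ℝ
  | 0 => 1
  | s + 1 => γ (s + 1) * (r γ s) ^ 2

noncomputable def P (γ : ℕ → ℝ) : ℕ → Polynomial ℝ
  | 0 => X - 1
  | s + 1 => P γ s * (P γ s + C (r γ s))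

noncomputable def nuInt (γ : ℕ → ℝ) (s : ℕ) (f : ℝ → ℝ) : ℝ :=
  (((P γ s + C (r γ s / 2)).roots.map f).sum) / 2 ^ s

lemma r_pos (γ : ℕ → ℝ) (hγ : ∀ s : ℕ, 0 < γ (s + 1) ∧ γ (s + 1) < 1 / 4) :
    ∀ t, 0 < r γ t := by
  intro t
  induction t with
  | zero => norm_num [r]
  | succ t ih => exact mul_pos (hγ t).1 (by positivity)

lemma P_monic (γ : ℕ → ℝ) : ∀ t, (P γ t).Monic ∧ (P γ t).degree = (2 ^ t : ℕ) := by
  intro t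
  induction t with
  | zero => exact ⟨monic_X_sub_C 1, by simpa [P] using degree_X_sub_C (1 : ℝ)⟩
  | succ t ih =>
    obtain ⟨hm, hd⟩ := ih
    have hpos : (0 : WithBot ℕ) < (P γ t).degree := by
      rw [hd]; exact_mod_cast pow_pos (by norm_num : (0:ℕ) < 2) t
    have hdeg2 : (P γ t + C (r γ t)).degree = (2 ^ t : ℕ) := by
      rw [degree_add_eq_left_of_degree_lt (lt_of_le_of_lt degree_C_le hpos), hd]
    have hm2 : (P γ t + C (r γ t)).Monic :=
      hm.add_of_left (lt_of_le_of_lt degree_C_le hpos)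
    refine ⟨hm.mul hm2, ?_⟩
    rw [show P γ (t+1) = P γ t * (P γ t + C (r γ t)) from rfl, degree_mul, hd, hdeg2,
      ← Nat.cast_add]
    norm_cast
    ring_nf

lemma monic_shift (γ : ℕ → ℝ) (t : ℕ) (a : ℝ) : (P γ t + C a).Monic := by
  obtain ⟨hm, hd⟩ := P_monic γ t
  have hpos : (0 : WithBot ℕ) < (P γ t).degree := by
    rw [hd]; exact_mod_cast pow_pos (by norm_num : (0:ℕ) < 2) t
  exact hm.add_of_left (lt_of_le_of_lt degree_C_le hpos)

lemma split (γ : ℕ → ℝ) (hγ : ∀ s : ℕ, 0 < γ (s + 1) ∧ γ (s + 1) < 1 / 4)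
    (t : ℕ) (c : ℝ) (hc : 0 < c) (hle : c ≤ (r γ t) ^ 2 / 4) :
    ∃ α β : ℝ, α + β = r γ t ∧ α * β = c ∧ 0 < α ∧ α ≤ r γ t ∧ 0 < β ∧ β ≤ r γ t ∧
      P γ (t + 1) + C c = (P γ t + C α) * (P γ t + C β) := by
  have hr : 0 < r γ t := r_pos γ hγ t
  set d := Real.sqrt ((r γ t) ^ 2 - 4 * c) with hd
  have hnn : (0:ℝ) ≤ (r γ t) ^ 2 - 4 * c := by linarith
  have hd2 : d ^ 2 = (r γ t) ^ 2 - 4 * c := Real.sq_sqrt hnn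
  have hd0 : 0 ≤ d := Real.sqrt_nonneg _
  have hdr : d ≤ r γ t := by nlinarith
  have hdlt : d < r γ t := by nlinarith
  refine ⟨(r γ t - d) / 2, (r γ t + d) / 2, by ring, by nlinarith, by linarith,
    by linarith, by linarith, by linarith, ?_⟩
  have h1 : ((r γ t - d) / 2) + ((r γ t + d) / 2) = r γ t := by ring
  have h2 : ((r γ t - d) / 2) * ((r γ t + d) / 2) = c := by nlinarith
  rw [show P γ (t+1) = P γ t * (P γ t + C (r γ t)) from rfl, ← h1, ← h2]
  simp only [map_add, map_mul]
  ring

def RCond (γ : ℕ → ℝ) : ℕ → ℝ → Prop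
  | 0, _ => True
  | t + 1, c => 0 < c ∧ c ≤ (r γ t) ^ 2 / 4

lemma rCond_of (γ : ℕ → ℝ) (hγ : ∀ s : ℕ, 0 < γ (s + 1) ∧ γ (s + 1) < 1 / 4)
    (t : ℕ) {x : ℝ} (hx : 0 < x) (hxr : x ≤ r γ t) : RCond γ t x := by
  cases t with
  | zero => trivial
  | succ t =>
    refine ⟨hx, hxr.trans ?_⟩
    have hr2 : (0:ℝ) ≤ (r γ t) ^ 2 := sq_nonneg _
    have := (hγ t).2
    rw [show r γ (t+1) = γ (t+1) * (r γ t)^2 from rfl]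
    nlinarith

lemma card_roots_full (γ : ℕ → ℝ) (hγ : ∀ s : ℕ, 0 < γ (s + 1) ∧ γ (s + 1) < 1 / 4) :
    ∀ t c, RCond γ t c → Multiset.card ((P γ t + C c).roots) = 2 ^ t := by
  intro t
  induction t with
  | zero =>
    intro c _
    have : P γ 0 + C c = X - C (1 - c) := by
      rw [show P γ 0 = X - 1 from rfl, map_sub, map_one]
      ring
    rw [this, roots_X_sub_C]
    simp
  | succ t ih =>
    intro c hcond
    obtain ⟨hc, hle⟩ := hcond
    obtain ⟨α, β, hsum, hprod, hα0, hαr, hβ0, hβr, hfact⟩ := split γ hγ t c hc hle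
    rw [hfact, roots_mul (mul_ne_zero (monic_shift γ t α).ne_zero
      (monic_shift γ t β).ne_zero), Multiset.card_add,
      ih α (rCond_of γ hγ t hα0 hαr), ih β (rCond_of γ hγ t hβ0 hβr)]
    ring

lemma sum_roots_zero (γ : ℕ → ℝ) (hγ : ∀ s : ℕ, 0 < γ (s + 1) ∧ γ (s + 1) < 1 / 4)
    (m : ℕ) : ∀ t, m < t → ∀ c, RCond γ t c →
    (((P γ t + C c).roots.map (fun x => (P γ m).eval x + r γ m / 2)).sum) = 0 := by
  intro t
  induction t with
  | zero => omega
  | succ t ih =>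
    intro hmt c hcond
    obtain ⟨hc, hle⟩ := hcond
    obtain ⟨α, β, hsum, hprod, hα0, hαr, hβ0, hβr, hfact⟩ := split γ hγ t c hc hle
    rw [hfact, roots_mul (mul_ne_zero (monic_shift γ t α).ne_zero
      (monic_shift γ t β).ne_zero), Multiset.map_add, Multiset.sum_add]
    rcases lt_or_eq_of_le (Nat.lt_succ_iff.mp hmt) with hlt | heq
    · rw [ih hlt α (rCond_of γ hγ t hα0 hαr), ih hlt β (rCond_of γ hγ t hβ0 hβr)]
      ring
    · subst heq
      have key : ∀ a : ℝ, 0 < a → a ≤ r γ m → ((P γ m + C a).roots.map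
          (fun x => (P γ m).eval x + r γ m / 2)).sum
          = (2 ^ m : ℝ) * (r γ m / 2 - a) := by
        intro a ha0 har
        have hcongr : (P γ m + C a).roots.map
            (fun x => (P γ m).eval x + r γ m / 2)
            = (P γ m + C a).roots.map (fun _ => r γ m / 2 - a) := by
          apply Multiset.map_congr rfl
          intro x hx
          have hx0 : (P γ m + C a).eval x = 0 :=
            (mem_roots (monic_shift γ m a).ne_zero).mp hx
          simp only [eval_add, eval_C] at hx0
          linarith
        rw [hcongr, Multiset.map_const', Multiset.sum_replicate,
          card_roots_full γ hγ m a (rCond_of γ hγ m ha0 har)]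
        simp [nsmul_eq_mul]
      rw [key α hα0 hαr, key β hβ0 hβr]
      linear_combination (-(2:ℝ) ^ m) * hsum

theorem stmt_1 (γ : ℕ → ℝ) (hγ : ∀ s : ℕ, 0 < γ (s + 1) ∧ γ (s + 1) < 1 / 4)
    (s m : ℕ) (hms : m < s) :
    nuInt γ s (fun x => (P γ m).eval x + r γ m / 2) = 0 := by
  obtain ⟨s', rfl⟩ : ∃ s', s = s' + 1 := ⟨s - 1, by omega⟩
  have hr : 0 < r γ s' := r_pos γ hγ s'
  have hg := hγ s'
  have hcond : RCond γ (s' + 1) (r γ (s' + 1) / 2) := by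
    constructor
    · have := r_pos γ hγ (s' + 1); linarith
    · rw [show r γ (s' + 1) = γ (s' + 1) * (r γ s') ^ 2 from rfl]
      nlinarith [sq_nonneg (r γ s')]
  rw [nuInt, sum_roots_zero γ hγ m (s' + 1) hms _ hcond, zero_div]
end

section
/- Let A = (Q_{2^{s_n}})^{i_n}(Q_{2^{s_{n−1}}})^{i_{n−1}}⋯(Q_{2^{s_1}})^{i_1} be an A-polynomial. If i_n = 2, then ∫ A dμ = ||Q_{2^{s_n}}||² · ∫ (Q_{2^{s_{n−1}}})^{i_{n−1}}⋯(Q_{2^{s_1}})^{i_1} dμ (where for n = 1 the remaining product is the constant 1). -/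
open Polynomial MeasureTheory Filter

section OrthogonalPolynomials

variable {μ : Measure ℝ}

lemma integrable_eval_mul_eval (hμint : ∀ p : ℝ[X], Integrable (fun x => p.eval x) μ)
    (p q : ℝ[X]) : Integrable (fun x => p.eval x * q.eval x) μ := by
  simpa only [eval_mul] using hμint (p * q)

lemma eq_of_monic_of_forall_integral_mul_eq_zero
    (hμint : ∀ p : ℝ[X], Integrable (fun x => p.eval x) μ)
    (hμpos : ∀ p : ℝ[X], p ≠ 0 → 0 < ∫ x, (p.eval x) ^ 2 ∂μ)
    {p q : ℝ[X]} (hp : p.Monic) (hq : q.Monic) (hpq : p.natDegree = q.natDegree)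
    (hp_orth : ∀ f : ℝ[X], f.degree < p.natDegree → ∫ x, p.eval x * f.eval x ∂μ = 0)
    (hq_orth : ∀ f : ℝ[X], f.degree < p.natDegree → ∫ x, q.eval x * f.eval x ∂μ = 0) :
    p = q := by
  by_contra hne
  have hdeg : (p - q).degree < p.natDegree := by
    rw [← degree_eq_natDegree hp.ne_zero]
    refine degree_sub_lt_left ?_ hp.ne_zero (by rw [hp.leadingCoeff, hq.leadingCoeff])
    rw [degree_eq_natDegree hp.ne_zero, degree_eq_natDegree hq.ne_zero, hpq]
  have hzero : ∫ x, ((p - q).eval x) ^ 2 ∂μ = 0 := calc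
    _ = ∫ x, (p.eval x * (p - q).eval x - q.eval x * (p - q).eval x) ∂μ := by
        congr with x
        rw [eval_sub]
        ring
    _ = 0 := by
        rw [integral_sub (integrable_eval_mul_eval hμint _ _) (integrable_eval_mul_eval hμint _ _),
          hp_orth _ hdeg, hq_orth _ hdeg, sub_zero]
  exact (hμpos _ (sub_ne_zero.2 hne)).ne' hzero

lemma integral_mul_sq_eq_integral_mul_integral_sq [IsProbabilityMeasure μ]
    (hμint : ∀ p : ℝ[X], Integrable (fun x => p.eval x) μ)
    {p q B : ℝ[X]} {n : ℕ} {c : ℝ}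
    (hp_orth : ∀ f : ℝ[X], f.degree < n → ∫ x, p.eval x * f.eval x ∂μ = 0)
    (hsq : q ^ 2 = p + C c) (hn : 0 < n) (hB : B.degree < n) :
    ∫ x, B.eval x * (q.eval x) ^ 2 ∂μ = (∫ x, (q.eval x) ^ 2 ∂μ) * ∫ x, B.eval x ∂μ := by
  have key : ∀ f : ℝ[X], f.degree < n →
      ∫ x, f.eval x * (q.eval x) ^ 2 ∂μ = c * ∫ x, f.eval x ∂μ := by
    intro f hf
    calc _ = ∫ x, (p.eval x * f.eval x + c * f.eval x) ∂μ := by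
          congr with x
          rw [← eval_pow, hsq, eval_add, eval_C]
          ring
      _ = c * ∫ x, f.eval x ∂μ := by
          rw [integral_add (integrable_eval_mul_eval hμint _ _) ((hμint f).const_mul c),
            hp_orth f hf, integral_const_mul, zero_add]
  have hnorm := key 1 (by rw [degree_one]; exact_mod_cast hn)
  simp only [eval_one, one_mul, integral_const, probReal_univ, one_smul, mul_one] at hnorm
  rw [key B hB, hnorm]

end OrthogonalPolynomials

lemma sum_mul_two_pow_add_two_le {sf idx : ℕ → ℕ} :
    ∀ m, (∀ k, 1 ≤ k → k ≤ m → sf k < sf (k + 1)) → (∀ k, 1 ≤ k → k ≤ m → idx k ≤ 2) →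
      ∑ k ∈ Finset.Icc 1 m, idx k * 2 ^ sf k + 2 ≤ 2 ^ (sf (m + 1) + 1)
  | 0, _, _ => by simpa using Nat.pow_le_pow_right two_pos (Nat.le_add_left 1 (sf 1))
  | m + 1, hsf, hidx => by
    have ih := sum_mul_two_pow_add_two_le m (fun k h1 h2 => hsf k h1 (by omega))
      (fun k h1 h2 => hidx k h1 (by omega))
    have hstep : 2 ^ (sf (m + 1) + 2) ≤ 2 ^ (sf (m + 1 + 1) + 1) :=
      Nat.pow_le_pow_right two_pos (Nat.add_le_add_right (hsf (m + 1) (by omega) le_rfl) 1)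
    have htop : idx (m + 1) * 2 ^ sf (m + 1) ≤ 2 * 2 ^ sf (m + 1) :=
      Nat.mul_le_mul_right _ (hidx (m + 1) (by omega) le_rfl)
    rw [Finset.sum_Icc_succ_top (by omega)]
    rw [pow_succ] at ih
    rw [pow_succ, pow_succ] at hstep
    omega

lemma degree_prod_pow_lt {Q : ℕ → ℝ[X]} (hQmonic : ∀ n, (Q n).Monic)
    (hQdeg : ∀ n, (Q n).natDegree = n) {sf idx : ℕ → ℕ} (m : ℕ)
    (hsf : ∀ k, 1 ≤ k → k ≤ m → sf k < sf (k + 1)) (hidx : ∀ k, 1 ≤ k → k ≤ m → idx k ≤ 2) :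
    (∏ k ∈ Finset.Icc 1 m, Q (2 ^ sf k) ^ idx k).degree < ↑(2 ^ (sf (m + 1) + 1)) := by
  have hsum := sum_mul_two_pow_add_two_le m hsf hidx
  have hdeg : (∏ k ∈ Finset.Icc 1 m, Q (2 ^ sf k) ^ idx k).natDegree < 2 ^ (sf (m + 1) + 1) := by
    rw [natDegree_prod_of_monic _ _ fun k _ => (hQmonic _).pow _]
    simp only [natDegree_pow, hQdeg]
    omega
  exact degree_le_natDegree.trans_lt (by exact_mod_cast hdeg)

section CantorPolynomials

variable {γ : ℕ → ℝ}

lemma r_nonneg (hγ : ∀ s : ℕ, 0 < γ (s + 1) ∧ γ (s + 1) < 1 / 4) : ∀ s, 0 ≤ r γ s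
  | 0 => zero_le_one
  | s + 1 => mul_nonneg (hγ s).1.le (sq_nonneg _)

lemma four_mul_r_succ_le (hγ : ∀ s : ℕ, 0 < γ (s + 1) ∧ γ (s + 1) < 1 / 4) (s : ℕ) :
    4 * r γ (s + 1) ≤ r γ s ^ 2 := by
  change 4 * (γ (s + 1) * r γ s ^ 2) ≤ r γ s ^ 2
  nlinarith [(hγ s).2, sq_nonneg (r γ s)]

variable (γ)

lemma monic_P_and_natDegree_P : ∀ s, (P γ s).Monic ∧ (P γ s).natDegree = 2 ^ s
  | 0 => ⟨monic_X_sub_C 1, natDegree_X_sub_C 1⟩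
  | s + 1 => by
    obtain ⟨hm, hd⟩ := monic_P_and_natDegree_P s
    have hmC : (P γ s + C (r γ s)).Monic :=
      hm.add_of_left (degree_C_le.trans_lt (by rw [degree_eq_natDegree hm.ne_zero, hd]; simp))
    refine ⟨hm.mul hmC, ?_⟩
    change (P γ s * (P γ s + C (r γ s))).natDegree = 2 ^ (s + 1)
    rw [hm.natDegree_mul hmC, natDegree_add_C, hd, pow_succ, mul_two]

lemma natDegree_P_add_C (s : ℕ) (a : ℝ) : (P γ s + C a).natDegree = 2 ^ s := by
  rw [natDegree_add_C, (monic_P_and_natDegree_P γ s).2]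

lemma monic_P_add_C (s : ℕ) (a : ℝ) : (P γ s + C a).Monic := by
  obtain ⟨hm, hd⟩ := monic_P_and_natDegree_P γ s
  exact hm.add_of_left (degree_C_le.trans_lt (by rw [degree_eq_natDegree hm.ne_zero, hd]; simp))

variable {γ}

lemma P_succ_add_C_eq_mul {s : ℕ} {c : ℝ} (hr : 0 ≤ r γ s) (hc0 : 0 ≤ c)
    (hc : 4 * c ≤ r γ s ^ 2) :
    ∃ a b, 0 ≤ a ∧ 0 ≤ b ∧ a + b = r γ s ∧
      P γ (s + 1) + C c = (P γ s + C a) * (P γ s + C b) := by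
  set R := r γ s
  set d := √(R ^ 2 - 4 * c)
  have hd0 : 0 ≤ d := Real.sqrt_nonneg _
  have hd : d ^ 2 = R ^ 2 - 4 * c := Real.sq_sqrt (by linarith)
  have hdR : d ≤ R := by nlinarith
  refine ⟨(R + d) / 2, (R - d) / 2, by positivity, by linarith, by ring, ?_⟩
  have hCR : C R = C ((R + d) / 2) + C ((R - d) / 2) := by rw [← C_add]; ring_nf
  have hCc : C c = C ((R + d) / 2) * C ((R - d) / 2) := by
    rw [← C_mul]; congr 1; nlinarith
  change P γ s * (P γ s + C R) + C c = _
  rw [hCR, hCc]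
  ring

lemma eval_P_of_mem_roots {s : ℕ} {a x : ℝ} (hx : x ∈ (P γ s + C a).roots) :
    (P γ s).eval x = -a := by
  have hroot := isRoot_of_mem_roots hx
  rw [IsRoot, eval_add, eval_C] at hroot
  linarith

noncomputable def levelSum (γ : ℕ → ℝ) (s : ℕ) (a : ℝ) (f : ℝ → ℝ) : ℝ :=
  ((P γ s + C a).roots.map f).sum

noncomputable def orthPoly (γ : ℕ → ℝ) (s : ℕ) : ℝ[X] :=
  P γ s + C (r γ s / 2)

lemma levelSum_P_mul_add (s : ℕ) (a : ℝ) (u v : ℝ → ℝ) :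
    levelSum γ s a (fun x => (P γ s).eval x * u x + v x) =
      -a * levelSum γ s a u + levelSum γ s a v := by
  rw [levelSum, levelSum, levelSum, ← Multiset.sum_map_mul_left, ← Multiset.sum_map_add]
  refine congrArg Multiset.sum (Multiset.map_congr rfl fun x hx => ?_)
  rw [eval_P_of_mem_roots hx]

lemma exists_levelSum_succ_eq_add (hγ : ∀ s : ℕ, 0 < γ (s + 1) ∧ γ (s + 1) < 1 / 4)
    {s : ℕ} {c : ℝ} (hc : c ∈ Set.Icc 0 (r γ (s + 1))) :
    ∃ a ∈ Set.Icc 0 (r γ s), ∃ b ∈ Set.Icc 0 (r γ s), a + b = r γ s ∧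
      ∀ f, levelSum γ (s + 1) c f = levelSum γ s a f + levelSum γ s b f := by
  obtain ⟨a, b, ha, hb, hab, hfactor⟩ := P_succ_add_C_eq_mul (r_nonneg hγ s) hc.1
    (by linarith [hc.2, four_mul_r_succ_le hγ s])
  refine ⟨a, ⟨ha, by linarith⟩, b, ⟨hb, by linarith⟩, hab, fun f => ?_⟩
  rw [levelSum, hfactor, roots_mul ((monic_P_add_C γ s a).mul (monic_P_add_C γ s b)).ne_zero,
    Multiset.map_add, Multiset.sum_add, levelSum, levelSum]

lemma levelSum_eval_eq_levelSum_zero (hγ : ∀ s : ℕ, 0 < γ (s + 1) ∧ γ (s + 1) < 1 / 4) :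
    ∀ s {q : ℝ[X]}, q.natDegree < 2 ^ s → ∀ a ∈ Set.Icc 0 (r γ s),
      levelSum γ s a q.eval = levelSum γ s 0 q.eval
  | 0, q, hq, a, _ => by
    have hroots : ∀ e : ℝ, (P γ 0 + C e).roots = {1 - e} := fun e => by
      rw [show P γ 0 + C e = X - C (1 - e) by rw [C_sub, C_1]; change X - 1 + C e = _; ring,
        roots_X_sub_C]
    rw [eq_C_of_natDegree_eq_zero (p := q) (by simpa using hq)]
    simp only [levelSum, hroots, eval_C, Multiset.map_singleton, Multiset.sum_singleton]
  | s + 1, q, hq, c, hc => by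
    obtain ⟨hm, hd⟩ := monic_P_and_natDegree_P γ s
    have hdiv : (q /ₘ P γ s).natDegree < 2 ^ s := by
      rw [natDegree_divByMonic q hm, hd]
      rw [pow_succ] at hq
      omega
    have hmod : (q %ₘ P γ s).natDegree < 2 ^ s := by
      rw [← hd]
      refine natDegree_modByMonic_lt q hm fun h => ?_
      rw [h, natDegree_one] at hd
      exact (pow_pos two_pos s).ne hd
    have hq_eq : q.eval = fun x => (P γ s).eval x * (q /ₘ P γ s).eval x + (q %ₘ P γ s).eval x := by
      funext x
      rw [← eval_mul, ← eval_add, add_comm, modByMonic_add_div]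
    have hlevel : ∀ e ∈ Set.Icc 0 (r γ s), levelSum γ s e q.eval =
        -e * levelSum γ s 0 (q /ₘ P γ s).eval + levelSum γ s 0 (q %ₘ P γ s).eval := by
      intro e he
      rw [hq_eq, levelSum_P_mul_add, levelSum_eval_eq_levelSum_zero hγ s hdiv e he,
        levelSum_eval_eq_levelSum_zero hγ s hmod e he]
    have hsplit : ∀ e ∈ Set.Icc 0 (r γ (s + 1)), levelSum γ (s + 1) e q.eval =
        -r γ s * levelSum γ s 0 (q /ₘ P γ s).eval + 2 * levelSum γ s 0 (q %ₘ P γ s).eval := by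
      intro e he
      obtain ⟨a, ha, b, hb, hab, hsum⟩ := exists_levelSum_succ_eq_add hγ he
      rw [hsum, hlevel a ha, hlevel b hb, ← hab]
      ring
    rw [hsplit c hc, hsplit 0 ⟨le_rfl, r_nonneg hγ _⟩]

lemma levelSum_orthPoly_mul_eq_zero (hγ : ∀ s : ℕ, 0 < γ (s + 1) ∧ γ (s + 1) < 1 / 4)
    {s : ℕ} {q : ℝ[X]} (hq : q.natDegree < 2 ^ s) :
    ∀ t, s < t → ∀ c ∈ Set.Icc 0 (r γ t), levelSum γ t c (orthPoly γ s * q).eval = 0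
  | 0, hst, _, _ => absurd hst (Nat.not_lt_zero s)
  | t + 1, hst, c, hc => by
    obtain ⟨a, ha, b, hb, hab, hsum⟩ := exists_levelSum_succ_eq_add hγ hc
    rw [hsum]
    rcases Nat.lt_succ_iff_lt_or_eq.1 hst with hlt | rfl
    · rw [levelSum_orthPoly_mul_eq_zero hγ hq t hlt a ha,
        levelSum_orthPoly_mul_eq_zero hγ hq t hlt b hb, add_zero]
    · have hlevel : ∀ e, levelSum γ s e (orthPoly γ s * q).eval =
          (r γ s / 2 - e) * levelSum γ s e q.eval := by
        intro e
        have heval : (orthPoly γ s * q).eval =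
            fun x => (P γ s).eval x * q.eval x + r γ s / 2 * q.eval x := by
          funext x
          rw [orthPoly, eval_mul, eval_add, eval_C]
          ring
        rw [heval, levelSum_P_mul_add]
        simp only [levelSum, Multiset.sum_map_mul_left]
        ring
      rw [hlevel, hlevel, levelSum_eval_eq_levelSum_zero hγ s hq a ha,
        levelSum_eval_eq_levelSum_zero hγ s hq b hb]
      linear_combination (-levelSum γ s 0 q.eval) * hab

lemma integral_orthPoly_mul_eq_zero (hγ : ∀ s : ℕ, 0 < γ (s + 1) ∧ γ (s + 1) < 1 / 4)
    {μ : Measure ℝ}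
    (hμconv : ∀ p : Polynomial ℝ,
      Tendsto (fun s => nuInt γ s (fun x => p.eval x)) atTop (nhds (∫ x, p.eval x ∂μ)))
    {s : ℕ} {q : ℝ[X]} (hq : q.degree < ↑(2 ^ s)) :
    ∫ x, (orthPoly γ s).eval x * q.eval x ∂μ = 0 := by
  have hq' : q.natDegree < 2 ^ s := by
    rcases eq_or_ne q 0 with rfl | hq0
    · simp
    · exact (natDegree_lt_iff_degree_lt hq0).2 hq
  have hzero : ∀ᶠ t in atTop, nuInt γ t (fun x => (orthPoly γ s * q).eval x) = 0 := by
    filter_upwards [eventually_gt_atTop s] with t ht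
    have hr := r_nonneg hγ t
    change levelSum γ t (r γ t / 2) _ / 2 ^ t = 0
    rw [levelSum_orthPoly_mul_eq_zero hγ hq' t ht _ ⟨by linarith, by linarith⟩, zero_div]
  have hlim := tendsto_nhds_unique (hμconv (orthPoly γ s * q))
    (tendsto_const_nhds.congr' (hzero.mono fun t ht => ht.symm))
  simpa only [eval_mul] using hlim

variable (γ) in
lemma orthPoly_sq (s : ℕ) :
    orthPoly γ s ^ 2 = orthPoly γ (s + 1) + C (r γ s ^ 2 / 4 - r γ (s + 1) / 2) := by
  have hCr : C (r γ s) = C (r γ s / 2) + C (r γ s / 2) := by rw [← C_add, add_halves]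
  have hCc : C (r γ s ^ 2 / 4 - r γ (s + 1) / 2) =
      C (r γ s / 2) * C (r γ s / 2) - C (r γ (s + 1) / 2) := by
    rw [← C_mul, ← C_sub]
    ring_nf
  rw [hCc]
  change (P γ s + _) ^ 2 = P γ s * (P γ s + C (r γ s)) + _ + _
  rw [hCr]
  ring

end CantorPolynomials

lemma Q_two_pow_eq_orthPoly {γ : ℕ → ℝ} (hγ : ∀ s : ℕ, 0 < γ (s + 1) ∧ γ (s + 1) < 1 / 4)
    {μ : Measure ℝ} (hμint : ∀ p : Polynomial ℝ, Integrable (fun x => p.eval x) μ)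
    (hμpos : ∀ p : Polynomial ℝ, p ≠ 0 → 0 < ∫ x, (p.eval x) ^ 2 ∂μ)
    (hμconv : ∀ p : Polynomial ℝ,
      Tendsto (fun s => nuInt γ s (fun x => p.eval x)) atTop (nhds (∫ x, p.eval x ∂μ)))
    {Q : ℕ → Polynomial ℝ} (hQmonic : ∀ n, (Q n).Monic) (hQdeg : ∀ n, (Q n).natDegree = n)
    (hQorth : ∀ n : ℕ, ∀ p : Polynomial ℝ, p.degree < (n : WithBot ℕ) →
      ∫ x, (Q n).eval x * p.eval x ∂μ = 0)
    (s : ℕ) : Q (2 ^ s) = orthPoly γ s :=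
  eq_of_monic_of_forall_integral_mul_eq_zero hμint hμpos (hQmonic _) (monic_P_add_C γ s _)
    (by rw [hQdeg, orthPoly, natDegree_P_add_C])
    (fun f hf => hQorth _ f (by rwa [hQdeg] at hf))
    (fun f hf => integral_orthPoly_mul_eq_zero hγ hμconv (by rwa [hQdeg] at hf))

theorem stmt_7_general (γ : ℕ → ℝ) (hγ : ∀ s : ℕ, 0 < γ (s + 1) ∧ γ (s + 1) < 1 / 4)
    (μ : Measure ℝ) [IsProbabilityMeasure μ]
    (hμint : ∀ p : Polynomial ℝ, Integrable (fun x => p.eval x) μ)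
    (hμpos : ∀ p : Polynomial ℝ, p ≠ 0 → 0 < ∫ x, (p.eval x) ^ 2 ∂μ)
    (hμconv : ∀ p : Polynomial ℝ,
      Tendsto (fun s => nuInt γ s (fun x => p.eval x)) atTop (nhds (∫ x, p.eval x ∂μ)))
    (Q : ℕ → Polynomial ℝ) (hQmonic : ∀ n, (Q n).Monic) (hQdeg : ∀ n, (Q n).natDegree = n)
    (hQorth : ∀ n : ℕ, ∀ p : Polynomial ℝ, p.degree < (n : WithBot ℕ) →
      ∫ x, (Q n).eval x * p.eval x ∂μ = 0)
    (n : ℕ) (hn : 1 ≤ n) (sf idx : ℕ → ℕ)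
    (hsmono : ∀ k, 1 ≤ k → k < n → sf k < sf (k + 1))
    (hidx : ∀ k, 1 ≤ k → k ≤ n → idx k = 1 ∨ idx k = 2)
    (htop : idx n = 2) :
    ∫ x, ∏ k ∈ Finset.Icc 1 n, ((Q (2 ^ sf k)).eval x) ^ idx k ∂μ =
      (∫ x, ((Q (2 ^ sf n)).eval x) ^ 2 ∂μ) *
        ∫ x, ∏ k ∈ Finset.Icc 1 (n - 1), ((Q (2 ^ sf k)).eval x) ^ idx k ∂μ := by
  obtain ⟨m, rfl⟩ : ∃ m, n = m + 1 := ⟨n - 1, by omega⟩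
  set s := sf (m + 1)
  set B : ℝ[X] := ∏ k ∈ Finset.Icc 1 m, Q (2 ^ sf k) ^ idx k
  have hB : ∀ x, B.eval x = ∏ k ∈ Finset.Icc 1 m, ((Q (2 ^ sf k)).eval x) ^ idx k := fun x => by
    simp only [B, eval_prod, eval_pow]
  have hBdeg : B.degree < ↑(2 ^ (s + 1)) := degree_prod_pow_lt hQmonic hQdeg m
    (fun k h1 h2 => hsmono k h1 (by omega))
    (fun k h1 h2 => by rcases hidx k h1 (by omega) with h | h <;> omega)
  have hsq : Q (2 ^ s) ^ 2 = Q (2 ^ (s + 1)) + C (r γ s ^ 2 / 4 - r γ (s + 1) / 2) := by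
    rw [Q_two_pow_eq_orthPoly hγ hμint hμpos hμconv hQmonic hQdeg hQorth,
      Q_two_pow_eq_orthPoly hγ hμint hμpos hμconv hQmonic hQdeg hQorth, orthPoly_sq]
  simp only [Finset.prod_Icc_succ_top (Nat.le_add_left 1 m), htop, Nat.add_sub_cancel, ← hB]
  exact integral_mul_sq_eq_integral_mul_integral_sq hμint (hQorth _) hsq (by positivity) hBdeg

theorem stmt_7 (γ : ℕ → ℝ) (hγ : ∀ s : ℕ, 0 < γ (s + 1) ∧ γ (s + 1) < 1 / 4)
    (μ : Measure ℝ) [IsProbabilityMeasure μ]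
    (hμint : ∀ p : Polynomial ℝ, Integrable (fun x => p.eval x) μ)
    (hμpos : ∀ p : Polynomial ℝ, p ≠ 0 → 0 < ∫ x, (p.eval x) ^ 2 ∂μ)
    (hμconv : ∀ p : Polynomial ℝ,
      Tendsto (fun s => nuInt γ s (fun x => p.eval x)) atTop (nhds (∫ x, p.eval x ∂μ)))
    (Q : ℕ → Polynomial ℝ) (hQmonic : ∀ n, (Q n).Monic) (hQdeg : ∀ n, (Q n).natDegree = n)
    (hQorth : ∀ n : ℕ, ∀ p : Polynomial ℝ, p.degree < (n : WithBot ℕ) →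
      ∫ x, (Q n).eval x * p.eval x ∂μ = 0)
    (n : ℕ) (hn : 1 ≤ n) (sf idx : ℕ → ℕ)
    (hs1 : 0 < sf 1) (hsmono : ∀ k, 1 ≤ k → k < n → sf k < sf (k + 1))
    (hidx : ∀ k, 1 ≤ k → k ≤ n → idx k = 1 ∨ idx k = 2)
    (htop : idx n = 2) :
    ∫ x, ∏ k ∈ Finset.Icc 1 n, ((Q (2 ^ sf k)).eval x) ^ idx k ∂μ =
      (∫ x, ((Q (2 ^ sf n)).eval x) ^ 2 ∂μ) *
        ∫ x, ∏ k ∈ Finset.Icc 1 (n - 1), ((Q (2 ^ sf k)).eval x) ^ idx k ∂μ :=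
  stmt_7_general γ hγ μ hμint hμpos hμconv Q hQmonic hQdeg hQorth n hn sf idx hsmono hidx htop
end
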